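/- Let 0 < γ < mn, δ ∈ ℝ, p⃗ a vector of exponents, and (w,v⃗) a pair of weights such that v_i^{-1} ∈ RH_∞ for every i ∈ I_1 and v_i^{-p_i'} is doubling for every i ∈ I_2. If (w,v⃗) satisfies the global condition, then (w,v⃗) satisfies the local condition. -/

import Mathlib

open MeasureTheory Metric Set
open scoped ENNReal NNReal BigOperators Classical

noncomputable section

/-- Euclidean `n`-space. -/
abbrev Rn (n : ℕ) := EuclideanSpace ℝ (Fin n)

/-- The conjugate exponent in `ℝ≥0∞`. -/
def conjE (q : ℝ≥0∞) : ℝ≥0∞ :=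
  if q = 1 then ∞ else if q = ∞ then 1
  else ENNReal.ofReal (q.toReal / (q.toReal - 1))

/-- An `L^q`-type quantity on the set `s` for an `ℝ≥0∞`-valued function `g`:
the usual integral expression for `q < ∞`, and the essential supremum for `q = ∞`. -/
def lpOn {n : ℕ} (q : ℝ≥0∞) (g : Rn n → ℝ≥0∞) (s : Set (Rn n)) : ℝ≥0∞ :=
  if q = ∞ then essSup g (volume.restrict s)
  else (∫⁻ y in s, g y ^ q.toReal) ^ (1 / q.toReal)

/-- A weight: measurable, positive and finite a.e., and locally integrable. -/
def IsWeight {n : ℕ} (u : Rn n → ℝ≥0∞) : Prop :=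
  Measurable u ∧ (∀ᵐ x ∂(volume : Measure (Rn n)), 0 < u x ∧ u x < ∞) ∧
    ∀ (x : Rn n) (R : ℝ), 0 < R → ∫⁻ y in ball x R, u y < ∞

/-- The `i`-th factor in the `ℍ_m(p⃗,γ,δ)` condition, where `q = p_i'` is the
conjugate exponent of `p_i` (an essential supremum when `p_i = 1`). -/
def HmFactor {n : ℕ} (m : ℕ) (γi : ℝ) (q : ℝ≥0∞) (vi : Rn n → ℝ≥0∞)
    (xB : Rn n) (R : ℝ) : ℝ≥0∞ :=
  lpOn q
    (fun y => (vi y)⁻¹ *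
      (volume (ball xB R) ^ ((n : ℝ)⁻¹) + edist xB y) ^
        (-((n : ℝ) - γi + 1 / (m : ℝ))))
    Set.univ

/-- The class `ℍ_m(p⃗,γ,δ)` for a pair `(w, v⃗)`. -/
def Hm {n : ℕ} (m : ℕ) (γv : Fin m → ℝ) (δ : ℝ) (p : Fin m → ℝ≥0∞)
    (w : Rn n → ℝ≥0∞) (v : Fin m → Rn n → ℝ≥0∞) : Prop :=
  ∃ C : ℝ, 0 < C ∧ ∀ (xB : Rn n) (R : ℝ), 0 < R →
    essSup w (volume.restrict (ball xB R)) *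
        volume (ball xB R) ^ (-((δ - 1) / (n : ℝ))) *
        ∏ i, HmFactor m (γv i) (conjE (p i)) (v i) xB R
      ≤ ENNReal.ofReal C

/-- The global condition associated to `ℍ_m(p⃗,γ,δ)`. -/
def GlobalCond {n : ℕ} (m : ℕ) (γv : Fin m → ℝ) (δ : ℝ) (p : Fin m → ℝ≥0∞)
    (w : Rn n → ℝ≥0∞) (v : Fin m → Rn n → ℝ≥0∞) : Prop :=
  ∃ C : ℝ, 0 < C ∧ ∀ (xB : Rn n) (R : ℝ), 0 < R →
    essSup w (volume.restrict (ball xB R)) *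
        volume (ball xB R) ^ (-((δ - 1) / (n : ℝ))) *
        ∏ i, lpOn (conjE (p i))
          (fun y => (v i y)⁻¹ * edist xB y ^ (-((n : ℝ) - γv i + 1 / (m : ℝ))))
          (ball xB R)ᶜ
      ≤ ENNReal.ofReal C

/-- The local condition associated to `ℍ_m(p⃗,γ,δ)`. -/
def LocalCond {n : ℕ} (m : ℕ) (γ δ : ℝ) (p : Fin m → ℝ≥0∞)
    (w : Rn n → ℝ≥0∞) (v : Fin m → Rn n → ℝ≥0∞) : Prop :=
  ∃ C : ℝ, 0 < C ∧ ∀ (xB : Rn n) (R : ℝ), 0 < R →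
    essSup w (volume.restrict (ball xB R)) *
        volume (ball xB R) ^
          (-(δ / (n : ℝ)) + γ / (n : ℝ) - ∑ i, ((p i)⁻¹).toReal) *
        ∏ i, (volume (ball xB R) ^ (-(((conjE (p i))⁻¹).toReal)) *
          lpOn (conjE (p i)) (fun y => (v i y)⁻¹) (ball xB R))
      ≤ ENNReal.ofReal C

/-- The reverse Hölder class `RH_s`. -/
def memRH {n : ℕ} (s : ℝ) (u : Rn n → ℝ≥0∞) : Prop :=
  ∃ C : ℝ, 0 < C ∧ ∀ (x : Rn n) (R : ℝ), 0 < R →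
    ((volume (ball x R))⁻¹ * ∫⁻ y in ball x R, u y ^ s) ^ (1 / s) ≤
      ENNReal.ofReal C * ((volume (ball x R))⁻¹ * ∫⁻ y in ball x R, u y)

/-- The reverse Hölder class `RH_∞`. -/
def memRHinf {n : ℕ} (u : Rn n → ℝ≥0∞) : Prop :=
  ∃ C : ℝ, 0 < C ∧ ∀ (x : Rn n) (R : ℝ), 0 < R →
    essSup u (volume.restrict (ball x R)) ≤
      ENNReal.ofReal C * ((volume (ball x R))⁻¹ * ∫⁻ y in ball x R, u y)

/-- Doubling condition for an `ℝ≥0∞`-valued weight. -/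
def IsDoubling {n : ℕ} (u : Rn n → ℝ≥0∞) : Prop :=
  ∃ C : ℝ, 0 < C ∧ ∀ (x : Rn n) (R : ℝ), 0 < R →
    ∫⁻ y in ball x (2 * R), u y ≤ ENNReal.ofReal C * ∫⁻ y in ball x R, u y

/-- The multilinear class `A_{p⃗,∞}`. -/
def ApInfty {n : ℕ} (m : ℕ) (p : Fin m → ℝ≥0∞) (v : Fin m → Rn n → ℝ≥0∞) : Prop :=
  ∃ C : ℝ, 0 < C ∧ ∀ (xB : Rn n) (R : ℝ), 0 < R →
    essSup (fun x => ∏ i, v i x) (volume.restrict (ball xB R)) *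
        ∏ i, (volume (ball xB R) ^ (-(((conjE (p i))⁻¹).toReal)) *
          lpOn (conjE (p i)) (fun y => (v i y)⁻¹) (ball xB R))
      ≤ ENNReal.ofReal C

/-- The kernel of the modified multilinear fractional operator `J_{γ,m}`. -/
def Jker {n : ℕ} (m : ℕ) (γ : ℝ) (x : Rn n) (y : Fin m → Rn n) : ℝ :=
  (∑ i, dist x (y i)) ^ (γ - (m : ℝ) * (n : ℝ)) -
    (if ∀ i, y i ∈ ball (0 : Rn n) 1 then 0
     else (∑ i, dist (0 : Rn n) (y i)) ^ (γ - (m : ℝ) * (n : ℝ)))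

/-- The modified multilinear fractional operator `J_{γ,m}`. -/
def Jop {n m : ℕ} (γ : ℝ) (f : Fin m → Rn n → ℝ) (x : Rn n) : ℝ :=
  ∫ y : Fin m → Rn n, Jker m γ x y * ∏ i, f i (y i)

/-- The vector `(1,…,1)` in `ℝⁿ`. -/
def uvec (n : ℕ) : Rn n := (EuclideanSpace.equiv (Fin n) ℝ).symm fun _ => 1

/-- The quadrant `A` associated to a ball with center `xB`. -/
def Aset {n : ℕ} (xB : Rn n) : Set (Rn n) := {y | ∀ i, xB i ≤ y i}

/-- The set `C₁` associated to a ball `B(xB,R)`. -/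
def C1set {n : ℕ} (xB : Rn n) (R : ℝ) : Set (Rn n) :=
  ball (xB - (R / (12 * Real.sqrt n)) • uvec n) (R / (12 * Real.sqrt n)) ∩
    {y | ∀ i, y i ≤ (xB - (R / (12 * Real.sqrt n)) • uvec n) i}

/-- The set `C₂` associated to a ball `B(xB,R)`. -/
def C2set {n : ℕ} (xB : Rn n) (R : ℝ) : Set (Rn n) :=
  ball (xB - (R / (3 * Real.sqrt n)) • uvec n) (2 * R / 3) ∩
    {y | ∀ i, y i ≤ (xB - (R / (3 * Real.sqrt n)) • uvec n) i}


/-!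
Fix a ball `B = B(x_B, R)`. For each `i` the local factor of `v_i⁻¹` on `B` is bounded by a constant
times `R ^ (n - γ_i + 1/m)` times the `i`-th global factor; the powers of `R` and `|B|` then combine
exactly into the global condition, because `∑ (n - γ_i + 1/m) = mn - γ + 1`, `1/p_i + 1/p_i' = 1`
and `|B| = c_n R^n`.

For `p_i > 1`, doubling of `v_i^{-p_i'}` moves the integral over `B` onto a ball `B(z, R)` with
`|x_B - z| = 2R`, which lies outside `B` and on which `|x_B - y| ≤ 3R`.
For `p_i = 1`, `RH_∞` on `B(x_B, 2CR)` bounds `sup_B v_i⁻¹` by half of itself plus a multiple of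
the supremum over the annulus outside `B`. Absorbing needs `sup_B v_i⁻¹ < ∞`: otherwise the `i`-th
factor of the global condition at `B(z, R)` would be infinite while the others are positive.
-/

lemma ENNReal.le_rpow_mul_mul_rpow_neg {d ρ : ℝ≥0∞} (hd : d ≤ ρ) (hρ0 : ρ ≠ 0) (hρ : ρ ≠ ⊤)
    {α : ℝ} (hα : 0 ≤ α) (x : ℝ≥0∞) : x ≤ ρ ^ α * (x * d ^ (-α)) := by
  have hone : 1 ≤ ρ ^ α * d ^ (-α) := by
    calc (1 : ℝ≥0∞) = ρ ^ α * (ρ ^ α)⁻¹ :=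
          (ENNReal.mul_inv_cancel (by positivity) (by finiteness)).symm
      _ ≤ ρ ^ α * d ^ (-α) := by
          rw [ENNReal.rpow_neg]
          gcongr
  calc x = x * 1 := (mul_one x).symm
    _ ≤ x * (ρ ^ α * d ^ (-α)) := by gcongr
    _ = ρ ^ α * (x * d ^ (-α)) := by ring

lemma ENNReal.le_two_mul_of_le_half_add {a b : ℝ≥0∞} (ha : a ≠ ⊤) (h : a ≤ a / 2 + b) :
    a ≤ 2 * b := by
  have hhalf : a / 2 ≤ b := by
    rw [← ENNReal.add_le_add_iff_left (ENNReal.div_ne_top ha two_ne_zero), ENNReal.add_halves]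
    exact h
  calc a = a / 2 * 2 := (ENNReal.div_mul_cancel two_ne_zero ENNReal.ofNat_ne_top).symm
    _ ≤ 2 * b := by rw [mul_comm]; gcongr

lemma ENNReal.prod_rpow_eq_rpow_sum {ι : Type*} (s : Finset ι) {x : ℝ≥0∞} (hx0 : x ≠ 0)
    (hx : x ≠ ⊤) (f : ι → ℝ) : ∏ i ∈ s, x ^ f i = x ^ ∑ i ∈ s, f i := by
  classical
  induction s using Finset.induction_on with
  | empty => simp
  | insert _ _ h ih =>
      rw [Finset.prod_insert h, Finset.sum_insert h, ih, ← ENNReal.rpow_add _ _ hx0 hx]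

lemma essSup_ne_zero_of_ae_pos {X : Type*} [MeasurableSpace X] {μ : Measure X}
    {g : X → ℝ≥0∞} (hpos : ∀ᵐ y ∂μ, 0 < g y) (hμ : μ ≠ 0) : essSup g μ ≠ 0 := by
  have : (ae μ).NeBot := ae_neBot.2 hμ
  intro h0
  obtain ⟨y, hy, hy0⟩ := (hpos.and (ENNReal.essSup_eq_zero_iff.1 h0)).exists
  exact hy.ne' hy0

lemma setLIntegral_le_essSup_mul {X : Type*} [MeasurableSpace X] {μ : Measure X}
    (f : X → ℝ≥0∞) (s : Set X) : ∫⁻ y in s, f y ∂μ ≤ essSup f (μ.restrict s) * μ s := by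
  calc ∫⁻ y in s, f y ∂μ ≤ ∫⁻ _ in s, essSup f (μ.restrict s) ∂μ :=
        lintegral_mono_ae (ENNReal.ae_le_essSup f)
    _ = essSup f (μ.restrict s) * μ s := setLIntegral_const _ _

lemma edist_le_ofReal_of_mem_ball {X : Type*} [PseudoMetricSpace X] {x y z : X} {r : ℝ}
    (hy : y ∈ ball z r) : edist x y ≤ ENNReal.ofReal (dist x z + r) := by
  rw [edist_dist]
  refine ENNReal.ofReal_le_ofReal ((dist_triangle x z y).trans ?_)
  rw [dist_comm z]
  linarith [mem_ball.1 hy]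

lemma Rn.exists_dist_eq {n : ℕ} (hn : 1 ≤ n) (x : Rn n) {r : ℝ} (hr : 0 ≤ r) :
    ∃ z : Rn n, dist x z = r := by
  have : Nonempty (Fin n) := ⟨⟨0, hn⟩⟩
  obtain ⟨e, he⟩ := exists_norm_eq (Rn n) hr
  exact ⟨x + e, by rw [dist_self_add_right, he]⟩

lemma Rn.volume_ball_mul {n : ℕ} (x : Rn n) {c : ℝ} (hc : 0 < c) (R : ℝ) :
    volume (ball x (c * R)) = ENNReal.ofReal (c ^ n) * volume (ball x R) := by
  rw [Measure.addHaar_ball_mul_of_pos volume x hc, finrank_euclideanSpace_fin,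
    Measure.addHaar_ball_center volume x R]

lemma Rn.volume_ball_rpow_mul_rpow {n : ℕ} (hn : n ≠ 0) (x : Rn n) {R : ℝ} (hR : 0 < R)
    (β : ℝ) :
    volume (ball x R) ^ (-β / n) * ENNReal.ofReal R ^ β =
      volume (ball (0 : Rn n) 1) ^ (-β / n) := by
  have hR0 : ENNReal.ofReal R ≠ 0 := (ENNReal.ofReal_pos.2 hR).ne'
  rw [Measure.addHaar_ball_of_pos volume x hR, finrank_euclideanSpace_fin,
    ENNReal.ofReal_pow hR.le, ← ENNReal.rpow_natCast,
    ENNReal.mul_rpow_of_ne_zero (by simp [hR0]) (measure_ball_pos volume _ one_pos).ne',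
    ← ENNReal.rpow_mul, mul_right_comm, ← ENNReal.rpow_add _ _ hR0 ENNReal.ofReal_ne_top,
    show (n : ℝ) * (-β / n) + β = 0 by field_simp; ring, ENNReal.rpow_zero, one_mul]

lemma Rn.ofReal_mul_volume_ball_mul_inv_le_inv_two {n : ℕ} (hn : 1 ≤ n) {C : ℝ} (hC : 1 ≤ C)
    (x : Rn n) {R : ℝ} (hR : 0 < R) :
    ENNReal.ofReal C * volume (ball x R) * (volume (ball x (2 * C * R)))⁻¹ ≤ 2⁻¹ := by
  set V := volume (ball x R)
  have hV0 : V ≠ 0 := (measure_ball_pos _ _ hR).ne'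
  have hV : V ≠ ⊤ := measure_ball_lt_top.ne
  have hpow : 2 * C ≤ (2 * C) ^ n := le_self_pow₀ (by linarith) (by omega)
  rw [Rn.volume_ball_mul x (by positivity : 0 < 2 * C) R,
    ENNReal.mul_inv (Or.inr hV) (Or.inl ENNReal.ofReal_ne_top), mul_assoc, mul_comm V,
    mul_assoc, ENNReal.inv_mul_cancel hV0 hV, mul_one]
  calc ENNReal.ofReal C * (ENNReal.ofReal ((2 * C) ^ n))⁻¹
      ≤ ENNReal.ofReal C * (2 * ENNReal.ofReal C)⁻¹ := by
        rw [← ENNReal.ofReal_ofNat 2, ← ENNReal.ofReal_mul zero_le_two]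
        gcongr
    _ = 2⁻¹ := by
        rw [ENNReal.mul_inv (Or.inr ENNReal.ofReal_ne_top) (Or.inl ENNReal.ofNat_ne_top),
          mul_left_comm, ENNReal.mul_inv_cancel (by simp; linarith) ENNReal.ofReal_ne_top,
          mul_one]

lemma holderConjugate_conjE {q : ℝ≥0∞} (hq : 1 ≤ q) : q.HolderConjugate (conjE q) := by
  rcases hq.eq_or_lt with rfl | hq1
  · simpa [conjE] using ENNReal.HolderConjugate.one_top
  rcases eq_or_ne q ⊤ with rfl | hqt
  · simpa [conjE] using ENNReal.HolderConjugate.top_one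
  have hq1' : 1 < q.toReal := by
    simpa using (ENNReal.toReal_lt_toReal ENNReal.one_ne_top hqt).2 hq1
  have h := (Real.HolderConjugate.conjExponent hq1').ennrealOfReal
  rw [ENNReal.ofReal_toReal hqt] at h
  simpa [conjE, hq1.ne', hqt, Real.conjExponent] using h

lemma inv_conjE_toReal_add_inv_toReal {q : ℝ≥0∞} (hq : 1 ≤ q) :
    ((conjE q)⁻¹).toReal + (q⁻¹).toReal = 1 := by
  have := holderConjugate_conjE hq
  rw [← ENNReal.toReal_add (by simp [ENNReal.HolderConjugate.ne_zero (conjE q) q])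
    (by simp [ENNReal.HolderConjugate.ne_zero q (conjE q)]), add_comm,
    ENNReal.HolderConjugate.inv_add_inv_eq_one, ENNReal.toReal_one]

lemma sum_inv_conjE_toReal {m : ℕ} {p : Fin m → ℝ≥0∞} (hp : ∀ i, 1 ≤ p i) :
    ∑ i, ((conjE (p i))⁻¹).toReal = m - ∑ i, ((p i)⁻¹).toReal := by
  rw [eq_sub_iff_add_eq, ← Finset.sum_add_distrib,
    Finset.sum_congr rfl fun i _ => inv_conjE_toReal_add_inv_toReal (hp i)]
  simp

lemma conjE_eq_top_iff {q : ℝ≥0∞} (hq : 1 ≤ q) : conjE q = ⊤ ↔ q = 1 := by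
  have := holderConjugate_conjE hq
  rw [← not_iff_not, ← Ne, ← lt_top_iff_ne_top,
    ENNReal.HolderConjugate.lt_top_iff_one_lt (conjE q) q, hq.lt_iff_ne, ne_comm]

lemma conjE_ne_zero {q : ℝ≥0∞} (hq : 1 ≤ q) : conjE q ≠ 0 :=
  have := holderConjugate_conjE hq
  ENNReal.HolderConjugate.ne_zero (conjE q) q

section lpOn

variable {n : ℕ} {q : ℝ≥0∞} {g h : Rn n → ℝ≥0∞} {s t : Set (Rn n)}

lemma lpOn_top (g : Rn n → ℝ≥0∞) (s : Set (Rn n)) :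
    lpOn ⊤ g s = essSup g (volume.restrict s) := if_pos rfl

lemma lpOn_of_ne_top (hq : q ≠ ⊤) (g : Rn n → ℝ≥0∞) (s : Set (Rn n)) :
    lpOn q g s = (∫⁻ y in s, g y ^ q.toReal) ^ (1 / q.toReal) := if_neg hq

lemma lpOn_mono_set (hst : s ⊆ t) : lpOn q g s ≤ lpOn q g t := by
  unfold lpOn
  split_ifs
  · exact essSup_mono_measure' (Measure.restrict_mono hst le_rfl)
  · exact ENNReal.rpow_le_rpow (lintegral_mono_set hst) (by positivity)

lemma lpOn_mono_ae (hgh : ∀ᵐ y ∂volume.restrict s, g y ≤ h y) : lpOn q g s ≤ lpOn q h s := by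
  unfold lpOn
  split_ifs
  · exact essSup_mono_ae hgh
  · refine ENNReal.rpow_le_rpow (lintegral_mono_ae ?_) (by positivity)
    filter_upwards [hgh] with y hy using ENNReal.rpow_le_rpow hy ENNReal.toReal_nonneg

lemma lpOn_const_mul (hq : q ≠ 0) {c : ℝ≥0∞} (hc : c ≠ ⊤) :
    lpOn q (fun y => c * g y) s = c * lpOn q g s := by
  rcases eq_or_ne q ⊤ with rfl | hqt
  · simp only [lpOn_top, ENNReal.essSup_const_mul]
  have hr : 0 < q.toReal := ENNReal.toReal_pos hq hqt
  simp only [lpOn_of_ne_top hqt, ENNReal.mul_rpow_of_nonneg _ _ hr.le]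
  rw [lintegral_const_mul' _ _ (ENNReal.rpow_ne_top_of_nonneg hr.le hc),
    ENNReal.mul_rpow_of_nonneg _ _ (by positivity), ← ENNReal.rpow_mul, mul_one_div_cancel hr.ne',
    ENNReal.rpow_one]

lemma lpOn_ne_zero (hg : Measurable g) (hpos : ∀ᵐ y ∂volume.restrict s, 0 < g y)
    (hs : volume s ≠ 0) : lpOn q g s ≠ 0 := by
  have hμ : volume.restrict s ≠ 0 := by rwa [Ne, Measure.restrict_eq_zero]
  unfold lpOn
  split_ifs
  · exact essSup_ne_zero_of_ae_pos hpos hμ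
  · have : (ae (volume.restrict s)).NeBot := ae_neBot.2 hμ
    have hint : ∫⁻ y in s, g y ^ q.toReal ≠ 0 := by
      rw [Ne, lintegral_eq_zero_iff (hg.pow_const _)]
      intro h0
      obtain ⟨y, hy, hy0⟩ := (hpos.and h0).exists
      exact (ENNReal.rpow_pos_of_nonneg hy ENNReal.toReal_nonneg).ne' hy0
    simp [ENNReal.rpow_eq_zero_iff, hint, ENNReal.toReal_nonneg]

lemma lpOn_le_rpow_mul_lpOn_mul_edist_rpow_neg (hq : q ≠ 0) {α : ℝ} (hα : 0 ≤ α)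
    {ρ : ℝ≥0∞} (hρ0 : ρ ≠ 0) (hρ : ρ ≠ ⊤) (hs : MeasurableSet s) {x : Rn n}
    (hd : ∀ y ∈ s, edist x y ≤ ρ) :
    lpOn q g s ≤ ρ ^ α * lpOn q (fun y => g y * edist x y ^ (-α)) s := by
  rw [← lpOn_const_mul hq (by finiteness)]
  exact lpOn_mono_ae (ae_restrict_of_forall_mem hs fun y hy =>
    ENNReal.le_rpow_mul_mul_rpow_neg (hd y hy) hρ0 hρ hα (g y))

lemma lpOn_ball_le_rpow_mul_lpOn_compl_ball (hq : q ≠ 0) {α : ℝ} (hα : 0 ≤ α) {x z : Rn n}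
    {R : ℝ} (hR : 0 < R) (hxz : dist x z = 2 * R) :
    lpOn q g (ball z R) ≤
      ENNReal.ofReal (3 * R) ^ α * lpOn q (fun y => g y * edist x y ^ (-α)) (ball x R)ᶜ := by
  refine (lpOn_le_rpow_mul_lpOn_mul_edist_rpow_neg (x := x) (ρ := ENNReal.ofReal (3 * R)) hq hα
    (ENNReal.ofReal_pos.2 (by positivity)).ne' ENNReal.ofReal_ne_top measurableSet_ball
    fun y hy => ?_).trans ?_
  · have := edist_le_ofReal_of_mem_ball (x := x) hy
    rwa [hxz, show 2 * R + R = 3 * R by ring] at this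
  · gcongr
    exact lpOn_mono_set
      (ball_disjoint_ball (x := x) (δ := R) (ε := R) (by linarith)).subset_compl_left

end lpOn

section Weights

variable {n : ℕ} {q : ℝ≥0∞} {u : Rn n → ℝ≥0∞}

lemma IsDoubling.exists_lintegral_ball_le (hu : IsDoubling u) :
    ∃ C : ℝ, 0 < C ∧ ∀ (x z : Rn n) (R : ℝ), 0 < R → dist x z ≤ 2 * R →
      ∫⁻ y in ball x R, u y ≤ ENNReal.ofReal C * ∫⁻ y in ball z R, u y := by
  obtain ⟨C, hC, hdbl⟩ := hu
  refine ⟨C * C, by positivity, fun x z R hR hxz => ?_⟩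
  have hsub : ball x R ⊆ ball z (2 * (2 * R)) :=
    ball_subset_ball' (by linarith)
  calc ∫⁻ y in ball x R, u y ≤ ∫⁻ y in ball z (2 * (2 * R)), u y := lintegral_mono_set hsub
    _ ≤ ENNReal.ofReal C * (ENNReal.ofReal C * ∫⁻ y in ball z R, u y) :=
        (hdbl z (2 * R) (by positivity)).trans (by gcongr; exact hdbl z R hR)
    _ = ENNReal.ofReal (C * C) * ∫⁻ y in ball z R, u y := by
        rw [ENNReal.ofReal_mul hC.le, mul_assoc]

lemma IsDoubling.exists_lpOn_ball_le (hn : 1 ≤ n) (hq0 : q ≠ 0) (hq : q ≠ ⊤) {α : ℝ}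
    (hα : 0 ≤ α) (hu : IsDoubling fun y => u y ^ q.toReal) :
    ∃ K : ℝ, 0 < K ∧ ∀ (x : Rn n) (R : ℝ), 0 < R →
      lpOn q u (ball x R) ≤
        ENNReal.ofReal K * ENNReal.ofReal R ^ α *
          lpOn q (fun y => u y * edist x y ^ (-α)) (ball x R)ᶜ := by
  obtain ⟨C, hC, hdbl⟩ := hu.exists_lintegral_ball_le
  refine ⟨C ^ (1 / q.toReal) * 3 ^ α, by positivity, fun x R hR => ?_⟩
  obtain ⟨z, hz⟩ := Rn.exists_dist_eq hn x (by positivity : 0 ≤ 2 * R)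
  calc lpOn q u (ball x R) ≤ ENNReal.ofReal C ^ (1 / q.toReal) * lpOn q u (ball z R) := by
        rw [lpOn_of_ne_top hq, lpOn_of_ne_top hq, ← ENNReal.mul_rpow_of_nonneg _ _ (by positivity)]
        gcongr
        exact hdbl x z R hR hz.le
    _ ≤ ENNReal.ofReal C ^ (1 / q.toReal) * (ENNReal.ofReal (3 * R) ^ α *
          lpOn q (fun y => u y * edist x y ^ (-α)) (ball x R)ᶜ) := by
        gcongr
        exact lpOn_ball_le_rpow_mul_lpOn_compl_ball hq0 hα hR hz
    _ = _ := by
        rw [ENNReal.ofReal_mul (Real.rpow_nonneg hC.le _), ENNReal.ofReal_mul (by norm_num),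
          ENNReal.mul_rpow_of_nonneg _ _ hα, ENNReal.ofReal_rpow_of_nonneg hC.le (by positivity),
          ENNReal.ofReal_rpow_of_nonneg (by norm_num) hα]
        ring

lemma essSup_ball_le_two_mul_essSup_annulus (hn : 1 ≤ n) {C : ℝ} (hC : 1 ≤ C)
    (hu : ∀ (x : Rn n) (R : ℝ), 0 < R → essSup u (volume.restrict (ball x R)) ≤
      ENNReal.ofReal C * ((volume (ball x R))⁻¹ * ∫⁻ y in ball x R, u y))
    {x : Rn n} {R : ℝ} (hR : 0 < R) (hfin : essSup u (volume.restrict (ball x R)) ≠ ⊤) :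
    essSup u (volume.restrict (ball x R)) ≤
      2 * (ENNReal.ofReal C *
        essSup u (volume.restrict (ball x (2 * C * R) \ ball x R))) := by
  set a := essSup u (volume.restrict (ball x R))
  set D := essSup u (volume.restrict (ball x (2 * C * R) \ ball x R))
  set V := volume (ball x R)
  set W := volume (ball x (2 * C * R))
  have hW0 : W ≠ 0 := (measure_ball_pos _ _ (by positivity)).ne'
  have hW : W ≠ ⊤ := measure_ball_lt_top.ne
  have hratio : ENNReal.ofReal C * V * W⁻¹ ≤ 2⁻¹ :=
    Rn.ofReal_mul_volume_ball_mul_inv_le_inv_two hn hC x hR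
  have hint : ∫⁻ y in ball x (2 * C * R), u y ≤ D * W + a * V :=
    calc ∫⁻ y in ball x (2 * C * R), u y
        ≤ ∫⁻ y in ball x (2 * C * R) \ ball x R ∪ ball x R, u y :=
          lintegral_mono_set (subset_sdiff_union _ _)
      _ ≤ (∫⁻ y in ball x (2 * C * R) \ ball x R, u y) + ∫⁻ y in ball x R, u y :=
          lintegral_union_le _ _ _
      _ ≤ D * W + a * V := add_le_add
          ((setLIntegral_le_essSup_mul u _).trans (by gcongr; exact measure_mono sdiff_subset))
          (setLIntegral_le_essSup_mul u _)
  have hsub : ball x R ⊆ ball x (2 * C * R) := ball_subset_ball (by nlinarith)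
  refine ENNReal.le_two_mul_of_le_half_add hfin ?_
  calc a ≤ essSup u (volume.restrict (ball x (2 * C * R))) :=
        essSup_mono_measure' (Measure.restrict_mono hsub le_rfl)
    _ ≤ ENNReal.ofReal C * (W⁻¹ * (D * W + a * V)) := (hu x _ (by positivity)).trans (by gcongr)
    _ = ENNReal.ofReal C * V * W⁻¹ * a + ENNReal.ofReal C * D := by
        rw [mul_add, mul_add, mul_comm W⁻¹ (D * W), mul_assoc D, ENNReal.mul_inv_cancel hW0 hW]
        ring
    _ ≤ a / 2 + ENNReal.ofReal C * D := by
        rw [ENNReal.div_eq_inv_mul]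
        gcongr

lemma memRHinf.exists_essSup_ball_le (hn : 1 ≤ n) {α : ℝ} (hα : 0 ≤ α) (hu : memRHinf u) :
    ∃ K : ℝ, 0 < K ∧ ∀ (x : Rn n) (R : ℝ), 0 < R →
      essSup u (volume.restrict (ball x R)) ≠ ⊤ →
      essSup u (volume.restrict (ball x R)) ≤
        ENNReal.ofReal K * ENNReal.ofReal R ^ α *
          essSup (fun y => u y * edist x y ^ (-α)) (volume.restrict (ball x R)ᶜ) := by
  obtain ⟨C, hC, hrh⟩ : ∃ C : ℝ, 1 ≤ C ∧ ∀ (x : Rn n) (R : ℝ), 0 < R →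
      essSup u (volume.restrict (ball x R)) ≤
        ENNReal.ofReal C * ((volume (ball x R))⁻¹ * ∫⁻ y in ball x R, u y) := by
    obtain ⟨C₀, -, hC₀⟩ := hu
    exact ⟨max C₀ 1, le_max_right _ _,
      fun x R hR => (hC₀ x R hR).trans (by gcongr; exact le_max_left _ _)⟩
  refine ⟨2 * C * (2 * C) ^ α, by positivity, fun x R hR hfin => ?_⟩
  have hannulus : essSup u (volume.restrict (ball x (2 * C * R) \ ball x R)) ≤
      ENNReal.ofReal (2 * C * R) ^ α *
        essSup (fun y => u y * edist x y ^ (-α)) (volume.restrict (ball x R)ᶜ) := by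
    simp only [← lpOn_top]
    refine (lpOn_le_rpow_mul_lpOn_mul_edist_rpow_neg (x := x) (ρ := ENNReal.ofReal (2 * C * R))
      ENNReal.top_ne_zero hα
      (ENNReal.ofReal_pos.2 (by positivity)).ne' ENNReal.ofReal_ne_top
      (measurableSet_ball.diff measurableSet_ball) fun y hy => ?_).trans ?_
    · rw [edist_dist, dist_comm]
      exact ENNReal.ofReal_le_ofReal (mem_ball.1 hy.1).le
    · gcongr
      exact lpOn_mono_set fun y hy => hy.2
  calc essSup u (volume.restrict (ball x R))
      ≤ 2 * (ENNReal.ofReal C * essSup u (volume.restrict (ball x (2 * C * R) \ ball x R))) :=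
        essSup_ball_le_two_mul_essSup_annulus hn hC hrh hR hfin
    _ ≤ 2 * (ENNReal.ofReal C * (ENNReal.ofReal (2 * C * R) ^ α *
          essSup (fun y => u y * edist x y ^ (-α)) (volume.restrict (ball x R)ᶜ))) := by
        gcongr
    _ = _ := by
        have hsplit : ENNReal.ofReal (2 * C * R) ^ α =
            ENNReal.ofReal ((2 * C) ^ α) * ENNReal.ofReal R ^ α := by
          rw [ENNReal.ofReal_mul (by positivity), ENNReal.mul_rpow_of_nonneg _ _ hα,
            ENNReal.ofReal_rpow_of_nonneg (by positivity) hα]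
        rw [hsplit, ENNReal.ofReal_mul (by positivity), ENNReal.ofReal_mul zero_le_two,
          ENNReal.ofReal_ofNat]
        ring

end Weights

lemma essSup_inv_ne_top_of_globalCond {n m : ℕ} (hn : 1 ≤ n) {γv : Fin m → ℝ}
    (hγv : ∀ i, γv i ≤ n) {δ : ℝ} {p : Fin m → ℝ≥0∞} {w : Rn n → ℝ≥0∞}
    {v : Fin m → Rn n → ℝ≥0∞} (hw : ∀ᵐ y, 0 < w y) (hvm : ∀ i, Measurable (v i))
    (hvfin : ∀ i, ∀ᵐ y, v i y < ⊤) (hglob : GlobalCond m γv δ p w v) {i : Fin m}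
    (hpi : p i = 1) (x : Rn n) {R : ℝ} (hR : 0 < R) :
    essSup (fun y => (v i y)⁻¹) (volume.restrict (ball x R)) ≠ ⊤ := by
  intro htop
  obtain ⟨C, -, hC⟩ := hglob
  obtain ⟨z, hz⟩ := Rn.exists_dist_eq hn x (by positivity : 0 ≤ 2 * R)
  have hα : ∀ j, 0 ≤ (n : ℝ) - γv j + 1 / (m : ℝ) := fun j => by
    have := hγv j
    positivity
  have hcompl : volume (ball z R)ᶜ ≠ 0 := by
    refine (lt_of_lt_of_le (measure_ball_pos volume x hR) (measure_mono ?_)).ne'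
    exact (ball_disjoint_ball (x := x) (δ := R) (ε := R) (by linarith)).subset_compl_right
  have hGi : lpOn (conjE (p i))
      (fun y => (v i y)⁻¹ * edist z y ^ (-((n : ℝ) - γv i + 1 / (m : ℝ)))) (ball z R)ᶜ = ⊤ := by
    have hle := lpOn_ball_le_rpow_mul_lpOn_compl_ball (g := fun y => (v i y)⁻¹)
      ENNReal.top_ne_zero (hα i) hR (by rwa [dist_comm])
    rw [lpOn_top, htop, top_le_iff, ENNReal.mul_eq_top] at hle
    rw [hpi, show conjE 1 = ⊤ by simp [conjE]]
    exact (hle.resolve_right fun h =>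
      ENNReal.rpow_ne_top_of_nonneg (hα i) ENNReal.ofReal_ne_top h.1).2
  have hG : ∀ j, lpOn (conjE (p j))
      (fun y => (v j y)⁻¹ * edist z y ^ (-((n : ℝ) - γv j + 1 / (m : ℝ)))) (ball z R)ᶜ ≠ 0 := by
    intro j
    refine lpOn_ne_zero ((hvm j).inv.mul (by fun_prop)) (ae_restrict_of_ae ?_) hcompl
    filter_upwards [hvfin j] with y hy
    refine ENNReal.mul_pos (ENNReal.inv_ne_zero.2 hy.ne) ?_
    rw [ENNReal.rpow_neg]
    exact ENNReal.inv_ne_zero.2 (ENNReal.rpow_ne_top_of_nonneg (hα j) (edist_ne_top z y))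
  have hprod : ∏ j, lpOn (conjE (p j))
      (fun y => (v j y)⁻¹ * edist z y ^ (-((n : ℝ) - γv j + 1 / (m : ℝ)))) (ball z R)ᶜ = ⊤ :=
    WithTop.prod_eq_top (Finset.mem_univ i) hGi fun j _ => hG j
  have hS : essSup w (volume.restrict (ball z R)) ≠ 0 :=
    essSup_ne_zero_of_ae_pos (ae_restrict_of_ae hw) (by simp [(measure_ball_pos volume z hR).ne'])
  have hV : volume (ball z R) ^ (-((δ - 1) / (n : ℝ))) ≠ 0 :=
    (ENNReal.rpow_pos (measure_ball_pos volume z hR) measure_ball_lt_top.ne).ne'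
  have hle := hC z R hR
  rw [hprod, ENNReal.mul_top (mul_ne_zero hS hV)] at hle
  exact ENNReal.ofReal_ne_top (top_le_iff.1 hle)

lemma exists_lpOn_inv_ball_le {n m : ℕ} (hn : 1 ≤ n) {γv : Fin m → ℝ} (hγv : ∀ i, γv i ≤ n)
    {δ : ℝ} {p : Fin m → ℝ≥0∞} (hp : ∀ i, 1 ≤ p i) {w : Rn n → ℝ≥0∞}
    {v : Fin m → Rn n → ℝ≥0∞} (hw : ∀ᵐ y, 0 < w y) (hvm : ∀ i, Measurable (v i))
    (hvfin : ∀ i, ∀ᵐ y, v i y < ⊤)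
    (hRHinf : ∀ i, p i = 1 → memRHinf fun y => (v i y)⁻¹)
    (hdbl : ∀ i, p i ≠ 1 → IsDoubling fun y => (v i y)⁻¹ ^ (conjE (p i)).toReal)
    (hglob : GlobalCond m γv δ p w v) (i : Fin m) :
    ∃ K : ℝ, 0 < K ∧ ∀ (xB : Rn n) (R : ℝ), 0 < R →
      lpOn (conjE (p i)) (fun y => (v i y)⁻¹) (ball xB R) ≤
        ENNReal.ofReal K * ENNReal.ofReal R ^ ((n : ℝ) - γv i + 1 / (m : ℝ)) *
          lpOn (conjE (p i))
            (fun y => (v i y)⁻¹ * edist xB y ^ (-((n : ℝ) - γv i + 1 / (m : ℝ)))) (ball xB R)ᶜ := by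
  have hα : 0 ≤ (n : ℝ) - γv i + 1 / (m : ℝ) := by
    have := hγv i
    positivity
  by_cases hpi : p i = 1
  · obtain ⟨K, hK, hle⟩ := (hRHinf i hpi).exists_essSup_ball_le hn hα
    refine ⟨K, hK, fun xB R hR => ?_⟩
    rw [(conjE_eq_top_iff (hp i)).2 hpi, lpOn_top, lpOn_top]
    exact hle xB R hR (essSup_inv_ne_top_of_globalCond hn hγv hw hvm hvfin hglob hpi xB hR)
  · exact (hdbl i hpi).exists_lpOn_ball_le hn (conjE_ne_zero (hp i))
      ((conjE_eq_top_iff (hp i)).not.2 hpi) hα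

lemma sum_const_sub_add_one_div {m : ℕ} (hm : m ≠ 0) (a : ℝ) (γv : Fin m → ℝ) :
    ∑ i, (a - γv i + 1 / (m : ℝ)) = m * a - ∑ i, γv i + 1 := by
  have : (m : ℝ) ≠ 0 := by exact_mod_cast hm
  simp only [Finset.sum_add_distrib, Finset.sum_sub_distrib, Finset.sum_const, Finset.card_univ,
    Fintype.card_fin, nsmul_eq_mul]
  field_simp

-- The expressions that `LocalCond` and `GlobalCond` bound uniformly over balls.
def localCondTerm {n : ℕ} (m : ℕ) (γ δ : ℝ) (p : Fin m → ℝ≥0∞) (w : Rn n → ℝ≥0∞)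
    (v : Fin m → Rn n → ℝ≥0∞) (xB : Rn n) (R : ℝ) : ℝ≥0∞ :=
  essSup w (volume.restrict (ball xB R)) *
      volume (ball xB R) ^ (-(δ / (n : ℝ)) + γ / (n : ℝ) - ∑ i, ((p i)⁻¹).toReal) *
    ∏ i, (volume (ball xB R) ^ (-(((conjE (p i))⁻¹).toReal)) *
      lpOn (conjE (p i)) (fun y => (v i y)⁻¹) (ball xB R))

def globalCondTerm {n : ℕ} (m : ℕ) (γv : Fin m → ℝ) (δ : ℝ) (p : Fin m → ℝ≥0∞)
    (w : Rn n → ℝ≥0∞) (v : Fin m → Rn n → ℝ≥0∞) (xB : Rn n) (R : ℝ) : ℝ≥0∞ :=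
  essSup w (volume.restrict (ball xB R)) * volume (ball xB R) ^ (-((δ - 1) / (n : ℝ))) *
    ∏ i, lpOn (conjE (p i))
      (fun y => (v i y)⁻¹ * edist xB y ^ (-((n : ℝ) - γv i + 1 / (m : ℝ)))) (ball xB R)ᶜ

lemma localCondTerm_le_mul_globalCondTerm {n m : ℕ} (hn : 1 ≤ n) (hm : 1 ≤ m) {γ : ℝ}
    {γv : Fin m → ℝ} (hγsum : ∑ i, γv i = γ) {δ : ℝ} {p : Fin m → ℝ≥0∞} (hp : ∀ i, 1 ≤ p i)
    {w : Rn n → ℝ≥0∞} {v : Fin m → Rn n → ℝ≥0∞} {K : Fin m → ℝ} (hK0 : ∀ i, 0 < K i)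
    (hK : ∀ i (xB : Rn n) (R : ℝ), 0 < R →
      lpOn (conjE (p i)) (fun y => (v i y)⁻¹) (ball xB R) ≤
        ENNReal.ofReal (K i) * ENNReal.ofReal R ^ ((n : ℝ) - γv i + 1 / (m : ℝ)) *
          lpOn (conjE (p i))
            (fun y => (v i y)⁻¹ * edist xB y ^ (-((n : ℝ) - γv i + 1 / (m : ℝ)))) (ball xB R)ᶜ)
    (xB : Rn n) {R : ℝ} (hR : 0 < R) :
    localCondTerm m γ δ p w v xB R ≤
      ENNReal.ofReal (∏ i, K i) * volume (ball (0 : Rn n) 1) ^ (-(m * n - γ + 1) / n) *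
        globalCondTerm m γv δ p w v xB R := by
  set V := volume (ball xB R)
  have hV0 : V ≠ 0 := (measure_ball_pos volume xB hR).ne'
  have hV : V ≠ ⊤ := measure_ball_lt_top.ne
  set P := ∑ i, ((p i)⁻¹).toReal
  set β : ℝ := m * n - γ + 1
  have hexp : V ^ (-(δ / n) + γ / n - P) * V ^ (-(m - P)) =
      V ^ (-β / n) * V ^ (-((δ - 1) / n)) := by
    have : (n : ℝ) ≠ 0 := by positivity
    rw [← ENNReal.rpow_add _ _ hV0 hV, ← ENNReal.rpow_add _ _ hV0 hV]
    congr 1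
    field_simp
    ring
  calc localCondTerm m γ δ p w v xB R
      ≤ essSup w (volume.restrict (ball xB R)) * V ^ (-(δ / n) + γ / n - P) *
        ∏ i, (V ^ (-((conjE (p i))⁻¹).toReal) *
          (ENNReal.ofReal (K i) * ENNReal.ofReal R ^ ((n : ℝ) - γv i + 1 / (m : ℝ)) *
            lpOn (conjE (p i))
              (fun y => (v i y)⁻¹ * edist xB y ^ (-((n : ℝ) - γv i + 1 / (m : ℝ))))
              (ball xB R)ᶜ)) := by
        unfold localCondTerm
        gcongr with i
        exact hK i xB R hR
    _ = ENNReal.ofReal (∏ i, K i) * (V ^ (-(δ / n) + γ / n - P) * V ^ (-(m - P))) *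
          ENNReal.ofReal R ^ β *
          (essSup w (volume.restrict (ball xB R)) *
            ∏ i, lpOn (conjE (p i))
              (fun y => (v i y)⁻¹ * edist xB y ^ (-((n : ℝ) - γv i + 1 / (m : ℝ))))
              (ball xB R)ᶜ) := by
        simp only [Finset.prod_mul_distrib, ENNReal.prod_rpow_eq_rpow_sum _ hV0 hV,
          ENNReal.prod_rpow_eq_rpow_sum _ (ENNReal.ofReal_pos.2 hR).ne' ENNReal.ofReal_ne_top,
          ← ENNReal.ofReal_prod_of_nonneg fun i _ => (hK0 i).le, Finset.sum_neg_distrib,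
          sum_inv_conjE_toReal hp, sum_const_sub_add_one_div (by omega : m ≠ 0), hγsum]
        ring
    _ = ENNReal.ofReal (∏ i, K i) * (V ^ (-β / n) * ENNReal.ofReal R ^ β) *
          globalCondTerm m γv δ p w v xB R := by
        rw [hexp, globalCondTerm]
        ring
    _ = _ := by rw [Rn.volume_ball_rpow_mul_rpow (by omega) xB hR]

lemma localCond_of_globalCond_of_lpOn_le {n m : ℕ} (hn : 1 ≤ n) (hm : 1 ≤ m) {γ : ℝ}
    {γv : Fin m → ℝ} (hγsum : ∑ i, γv i = γ) {δ : ℝ} {p : Fin m → ℝ≥0∞} (hp : ∀ i, 1 ≤ p i)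
    {w : Rn n → ℝ≥0∞} {v : Fin m → Rn n → ℝ≥0∞} {K : Fin m → ℝ} (hK0 : ∀ i, 0 < K i)
    (hK : ∀ i (xB : Rn n) (R : ℝ), 0 < R →
      lpOn (conjE (p i)) (fun y => (v i y)⁻¹) (ball xB R) ≤
        ENNReal.ofReal (K i) * ENNReal.ofReal R ^ ((n : ℝ) - γv i + 1 / (m : ℝ)) *
          lpOn (conjE (p i))
            (fun y => (v i y)⁻¹ * edist xB y ^ (-((n : ℝ) - γv i + 1 / (m : ℝ)))) (ball xB R)ᶜ)
    (hglob : GlobalCond m γv δ p w v) :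
    LocalCond m γ δ p w v := by
  obtain ⟨Cg, hCg, hg⟩ := hglob
  set c : ℝ≥0∞ := volume (ball (0 : Rn n) 1) ^ (-(m * n - γ + 1) / n)
  have hc0 : c ≠ 0 :=
    (ENNReal.rpow_pos (measure_ball_pos volume _ one_pos) measure_ball_lt_top.ne).ne'
  have hc : c ≠ ⊤ :=
    ENNReal.rpow_ne_top_of_ne_zero (measure_ball_pos volume _ one_pos).ne' measure_ball_lt_top.ne
  have hKnn : 0 ≤ ∏ i, K i := Finset.prod_nonneg fun i _ => (hK0 i).le
  refine ⟨(∏ i, K i) * c.toReal * Cg,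
    mul_pos (mul_pos (Finset.prod_pos fun i _ => hK0 i) (ENNReal.toReal_pos hc0 hc)) hCg,
    fun xB R hR => ?_⟩
  calc localCondTerm m γ δ p w v xB R
      ≤ ENNReal.ofReal (∏ i, K i) * c * globalCondTerm m γv δ p w v xB R :=
        localCondTerm_le_mul_globalCondTerm hn hm hγsum hp hK0 hK xB hR
    _ ≤ ENNReal.ofReal (∏ i, K i) * c * ENNReal.ofReal Cg := by
        gcongr
        exact hg xB R hR
    _ = ENNReal.ofReal ((∏ i, K i) * c.toReal * Cg) := by
        rw [ENNReal.ofReal_mul (mul_nonneg hKnn ENNReal.toReal_nonneg), ENNReal.ofReal_mul hKnn,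
          ENNReal.ofReal_toReal hc]

theorem statement7_general {n m : ℕ} (hn : 1 ≤ n) (hm : 1 ≤ m) (γ : ℝ)
    (γv : Fin m → ℝ) (hγv : ∀ i, 0 < γv i ∧ γv i < n)
    (hγsum : ∑ i, γv i = γ) (δ : ℝ) (p : Fin m → ℝ≥0∞) (hp : ∀ i, 1 ≤ p i)
    (w : Rn n → ℝ≥0∞) (v : Fin m → Rn n → ℝ≥0∞) (hw : IsWeight w)
    (hv : ∀ i, IsWeight (v i))
    (hRHinf : ∀ i, p i = 1 → memRHinf fun y => (v i y)⁻¹)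
    (hdbl : ∀ i, p i ≠ 1 → IsDoubling fun y => (v i y)⁻¹ ^ (conjE (p i)).toReal)
    (hglob : GlobalCond m γv δ p w v) :
    LocalCond m γ δ p w v := by
  choose K hK0 hK using exists_lpOn_inv_ball_le hn (fun i => (hγv i).2.le) hp
    (hw.2.1.mono fun _ h => h.1) (fun i => (hv i).1) (fun i => (hv i).2.1.mono fun _ h => h.2)
    hRHinf hdbl hglob
  exact localCond_of_globalCond_of_lpOn_le hn hm hγsum hp hK0 hK hglob

/-- under `RH_∞` on `v_i⁻¹` for `i ∈ I₁` and doubling of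
`v_i^{-p_i'}` for `i ∈ I₂`, the global condition implies the local condition. -/
theorem statement7 {n m : ℕ} (hn : 1 ≤ n) (hm : 1 ≤ m) (γ : ℝ) (hγ0 : 0 < γ)
    (hγ : γ < m * n) (γv : Fin m → ℝ) (hγv : ∀ i, 0 < γv i ∧ γv i < n)
    (hγsum : ∑ i, γv i = γ) (δ : ℝ) (p : Fin m → ℝ≥0∞) (hp : ∀ i, 1 ≤ p i)
    (w : Rn n → ℝ≥0∞) (v : Fin m → Rn n → ℝ≥0∞) (hw : IsWeight w)
    (hv : ∀ i, IsWeight (v i))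
    (hRHinf : ∀ i, p i = 1 → memRHinf fun y => (v i y)⁻¹)
    (hdbl : ∀ i, p i ≠ 1 → IsDoubling fun y => (v i y)⁻¹ ^ (conjE (p i)).toReal)
    (hglob : GlobalCond m γv δ p w v) :
    LocalCond m γ δ p w v :=
  statement7_general hn hm γ γv hγv hγsum δ p hp w v hw hv hRHinf hdbl hglob
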